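/- Let U = W⁰((λ−i)/(λ+i)) = F⁻¹ M_{(λ−i)/(λ+i)} F acting on L²(ℝ). Then U is unitary and Uʲψ₀ = ψⱼ for all j ∈ ℤ, where ψ₀(t) = √2e^{−t}1_{t>0} and ψⱼ are the extended Laguerre functions (ψⱼ(t) = −ψ_{−j−1}(−t) for j < 0). -/

import Mathlib

open MeasureTheory

/-- The `n`-th Laguerre polynomial. -/
noncomputable def laguerre (n : ℕ) (x : ℝ) : ℝ :=
  ∑ k ∈ Finset.range (n + 1), (-1 : ℝ) ^ k * (n.choose k) * x ^ k / (k.factorial)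

/-- The Laguerre function `ψₙ(t) = √2 e^{-t} Λₙ(2t)·1_{t>0}` for `n ≥ 0`. -/
noncomputable def psi (n : ℕ) (t : ℝ) : ℝ :=
  if 0 < t then Real.sqrt 2 * Real.exp (-t) * laguerre n (2 * t) else 0

/-- The extended family `ψₙ`, `n ∈ ℤ`, with `ψₙ(t) = -ψ_{-n-1}(-t)` for `n < 0`. -/
noncomputable def psiZ (n : ℤ) (t : ℝ) : ℝ :=
  if 0 ≤ n then psi n.toNat t else -psi (-n - 1).toNat (-t)

/-- The symbol `m(λ) = (λ-i)/(λ+i)` of the operator `U = W⁰((λ-i)/(λ+i))`. -/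
noncomputable def symbU (l : ℝ) : ℂ := ((l : ℂ) - Complex.I) / ((l : ℂ) + Complex.I)

/-!
For `c = 1 - iλ` (so `Re c > 0`), integrating by parts gives the moments
`∫₀^∞ tᵏ e^{-ct} dt = k!/c^{k+1}`, and the binomial theorem then sums the Laguerre expansion to
`Fψₙ(λ) = (1 - 2/c)ⁿ · √2/c`, where `1 - 2/c = (λ-i)/(λ+i)`. For `j < 0` the reflection
`t ↦ -t` in `ψⱼ(t) = -ψ_{-j-1}(-t)` replaces `λ` by `-λ`, which inverts the symbol.
-/

open Set Filter Topology Complex Nat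

lemma norm_pow_mul_cexp_neg_mul (c : ℂ) (k : ℕ) {t : ℝ} (ht : 0 ≤ t) :
    ‖(t : ℂ) ^ k * cexp (-(c * t))‖ = t ^ k * Real.exp (-c.re * t) := by
  rw [norm_mul, norm_pow, norm_exp, Complex.norm_of_nonneg ht]
  simp

lemma integrableOn_pow_mul_cexp_neg_mul {c : ℂ} (hc : 0 < c.re) (k : ℕ) :
    IntegrableOn (fun t : ℝ ↦ (t : ℂ) ^ k * cexp (-(c * t))) (Ioi 0) := by
  have h := integrableOn_rpow_mul_exp_neg_mul_rpow (s := k) (p := 1)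
    (by linarith [k.cast_nonneg (α := ℝ)]) one_pos hc
  refine h.mono' (by fun_prop) ?_
  filter_upwards [self_mem_ae_restrict measurableSet_Ioi] with t ht
  rw [norm_pow_mul_cexp_neg_mul c k ht.le, Real.rpow_natCast, Real.rpow_one]

lemma tendsto_pow_mul_cexp_neg_mul_atTop {c : ℂ} (hc : 0 < c.re) (k : ℕ) :
    Tendsto (fun t : ℝ ↦ (t : ℂ) ^ k * cexp (-(c * t))) atTop (𝓝 0) := by
  rw [tendsto_zero_iff_norm_tendsto_zero]
  refine (tendsto_rpow_mul_exp_neg_mul_atTop_nhds_zero k c.re hc).congr' ?_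
  filter_upwards [eventually_ge_atTop 0] with t ht
  rw [norm_pow_mul_cexp_neg_mul c k ht, Real.rpow_natCast]

lemma integral_Ioi_pow_mul_cexp_neg_mul {c : ℂ} (hc : 0 < c.re) (k : ℕ) :
    ∫ t in Ioi (0 : ℝ), (t : ℂ) ^ k * cexp (-(c * t)) = k ! / c ^ (k + 1) := by
  have hc0 : c ≠ 0 := fun h ↦ by simp [h] at hc
  induction k with
  | zero =>
    simpa [neg_mul, neg_div_neg_eq] using integral_exp_mul_complex_Ioi (a := -c) (by simpa) 0
  | succ k ih =>
    have hv : ∀ t : ℝ, HasDerivAt (fun t : ℝ ↦ -cexp (-(c * t)) / c) (cexp (-(c * t))) t := by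
      intro t
      refine (((hasDerivAt_id t).ofReal_comp.const_mul c).neg.cexp.neg.div_const c).congr_deriv ?_
      field_simp
      simp
    have hu : ∀ t : ℝ, HasDerivAt (fun t : ℝ ↦ (t : ℂ) ^ (k + 1)) ((k + 1) * (t : ℂ) ^ k) t := by
      intro t
      simpa using (hasDerivAt_pow (k + 1) (t : ℂ)).comp_ofReal
    have parts := integral_Ioi_mul_deriv_eq_deriv_mul (a := 0) (a' := 0) (b' := 0)
      (fun t _ ↦ hu t) (fun t _ ↦ hv t) (integrableOn_pow_mul_cexp_neg_mul hc (k + 1))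
      (IntegrableOn.congr_fun ((integrableOn_pow_mul_cexp_neg_mul hc k).const_mul ((k + 1) / c)).neg
        (fun t _ ↦ by simp only [Pi.neg_apply, Pi.mul_apply]; ring) measurableSet_Ioi) ?_ ?_
    · have h_rearr : ∀ t : ℝ, (k + 1) * (t : ℂ) ^ k * (-cexp (-(c * t)) / c)
          = -((k + 1) / c) * ((t : ℂ) ^ k * cexp (-(c * t))) := fun t ↦ by ring
      simp_rw [parts, h_rearr, integral_const_mul, ih, Nat.factorial_succ]
      push_cast
      field_simp
      ring
    · refine tendsto_nhdsWithin_of_tendsto_nhds ?_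
      convert ((hu 0).continuousAt.mul (hv 0).continuousAt).tendsto using 2
      simp
    · simpa [Pi.mul_def, mul_div_assoc', neg_div] using
        ((tendsto_pow_mul_cexp_neg_mul_atTop hc (k + 1)).div_const c).neg

lemma ofReal_add_I_ne_zero (l : ℝ) : (l : ℂ) + I ≠ 0 := fun h ↦ by
  simpa using congrArg im h

lemma one_sub_I_mul_ne_zero (l : ℝ) : 1 - I * l ≠ 0 := fun h ↦ by
  simpa using congrArg re h

lemma one_add_I_mul_ne_zero (l : ℝ) : 1 + I * l ≠ 0 := fun h ↦ by
  simpa using congrArg re h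

lemma norm_symbU (l : ℝ) : ‖symbU l‖ = 1 := by
  rw [symbU, norm_div, div_eq_one_iff_eq (norm_ne_zero_iff.mpr (ofReal_add_I_ne_zero l)),
    norm_def, norm_def, normSq_apply, normSq_apply]
  simp

lemma symbU_eq_one_sub (l : ℝ) : symbU l = 1 - 2 / (1 - I * l) := by
  have h := one_sub_I_mul_ne_zero l
  rw [symbU, one_sub_div h, div_eq_div_iff (ofReal_add_I_ne_zero l) h]
  linear_combination (2 * (l : ℂ)) * I_sq

lemma symbU_mul_one_sub_I_mul (l : ℝ) : symbU l * (1 - I * l) = -(1 + I * l) := by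
  rw [symbU_eq_one_sub]
  field_simp [one_sub_I_mul_ne_zero l]
  ring

lemma symbU_neg (l : ℝ) : symbU (-l) = (symbU l)⁻¹ := by
  rw [symbU, symbU, inv_div, ofReal_neg, ← neg_add', show -(l : ℂ) + I = -(l - I) by ring,
    neg_div_neg_eq]

noncomputable def fourierInt (f : ℝ → ℝ) (l : ℝ) : ℂ := ∫ t : ℝ, (f t : ℂ) * cexp (I * l * t)

lemma fourierInt_neg_comp_neg (f : ℝ → ℝ) (l : ℝ) :
    fourierInt (fun t ↦ -f (-t)) l = -fourierInt f (-l) := by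
  rw [fourierInt, fourierInt, ← integral_neg, ← integral_neg_eq_self]
  congr 1 with t
  push_cast
  ring_nf

lemma psi_mul_cexp_eq_sum (n : ℕ) (l : ℝ) {t : ℝ} (ht : 0 < t) :
    (psi n t : ℂ) * cexp (I * l * t) = ∑ k ∈ Finset.range (n + 1),
      (√2 * (-2) ^ k * n.choose k / k !) * ((t : ℂ) ^ k * cexp (-((1 - I * l) * t))) := by
  have h_exp : cexp (-t) * cexp (I * l * t) = cexp (-((1 - I * l) * t)) := by
    rw [← Complex.exp_add]
    ring_nf
  simp only [psi, if_pos ht, laguerre]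
  push_cast
  rw [Finset.mul_sum, Finset.sum_mul]
  refine Finset.sum_congr rfl fun k _ ↦ ?_
  rw [← h_exp, neg_pow (2 : ℂ)]
  ring

lemma fourierInt_psi (n : ℕ) (l : ℝ) :
    fourierInt (psi n) l = symbU l ^ n * (√2 / (1 - I * l)) := by
  have hc : 0 < (1 - I * l).re := by simp
  have h_supp : ∀ t ∉ Ioi (0 : ℝ), (psi n t : ℂ) * cexp (I * l * t) = 0 := fun t ht ↦ by
    simp [psi, show ¬ 0 < t from ht]
  rw [fourierInt, ← setIntegral_eq_integral_of_forall_compl_eq_zero h_supp,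
    setIntegral_congr_fun measurableSet_Ioi fun t ht ↦ psi_mul_cexp_eq_sum n l ht,
    integral_finsetSum _ fun k _ ↦ (integrableOn_pow_mul_cexp_neg_mul hc k).const_mul _]
  simp_rw [integral_const_mul, integral_Ioi_pow_mul_cexp_neg_mul hc]
  rw [symbU_eq_one_sub, sub_eq_neg_add 1 (2 / (1 - I * l)), add_pow, Finset.sum_mul]
  refine Finset.sum_congr rfl fun k _ ↦ ?_
  have hk : (k ! : ℂ) ≠ 0 := by exact_mod_cast k.factorial_ne_zero
  rw [one_pow, ← neg_div, div_pow]
  field_simp [one_sub_I_mul_ne_zero l]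
  ring

lemma fourierInt_psiZ (j : ℤ) (l : ℝ) :
    fourierInt (psiZ j) l = symbU l ^ j * (√2 / (1 - I * l)) := by
  cases j with
  | ofNat n =>
    have h_psiZ : psiZ n = psi n := funext fun t ↦ by simp [psiZ]
    rw [Int.ofNat_eq_natCast, h_psiZ, fourierInt_psi, zpow_natCast]
  | negSucc n =>
    have h_psiZ : psiZ (Int.negSucc n) = fun t ↦ -psi n (-t) := funext fun t ↦ by
      simp [psiZ]
    have hs : symbU l ≠ 0 := norm_ne_zero_iff.mp (by simp [norm_symbU])
    rw [h_psiZ, fourierInt_neg_comp_neg, fourierInt_psi, symbU_neg, zpow_negSucc, ofReal_neg,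
      inv_pow]
    field_simp [one_sub_I_mul_ne_zero l, one_add_I_mul_ne_zero l]
    linear_combination -symbU l ^ n * symbU_mul_one_sub_I_mul l

/-- Unitarity of `U = F⁻¹ M_m F` is encoded as `|m| = 1` together with the resulting
`L²`-isometry of `M_m`, and `Uʲψ₀ = ψⱼ` on the Fourier side as `Fψⱼ = mʲ · Fψ₀`. -/
theorem stmt16 :
    (∀ l : ℝ, ‖symbU l‖ = 1) ∧
    (∀ f : ℝ → ℂ, ∫ l : ℝ, ‖symbU l * f l‖ ^ 2 = ∫ l : ℝ, ‖f l‖ ^ 2) ∧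
    (∀ (j : ℤ) (l : ℝ),
      (∫ t : ℝ, (psiZ j t : ℂ) * Complex.exp (Complex.I * l * t)) =
        symbU l ^ j * ∫ t : ℝ, (psiZ 0 t : ℂ) * Complex.exp (Complex.I * l * t)) := by
  refine ⟨norm_symbU, fun f ↦ by simp_rw [norm_mul, norm_symbU, one_mul], fun j l ↦ ?_⟩
  change fourierInt (psiZ j) l = symbU l ^ j * fourierInt (psiZ 0) l
  rw [fourierInt_psiZ, fourierInt_psiZ 0, zpow_zero, one_mul]
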